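/- arXiv:2505.03648 — 2 statements merged into one kernel-verified Lean document; each statement's English description precedes it below -/
import Mathlib

section
/- For the Hopfield dynamics ẋ = W g(x) - x + b with g(x) = ∇L(x), symmetric W, and positive semidefinite Hessian ∇²L(x), the energy E_H(x) = (x - b)ᵀ g(x) - L(x) - ½ g(x)ᵀ W g(x) satisfies dE_H/dt = -ẋᵀ ∇²L(x) ẋ ≤ 0 along trajectories. -/
/-!
The hypotheses only provide directional derivatives of `L` and `g`, so the work lies in the
chain rule along the trajectory. Positive semidefiniteness of the Hessian makes `g` a monotone
operator, hence `L` convex with subgradient `g`. Monotonicity upgrades the directional derivative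
of `g` to a derivative along any differentiable curve: comparing `x s` with the test points
`x t + (s - t) • (x' t - q)`, for `q = ±ε eᵢ`, bounds each coordinate of the remainder by half its
norm plus `O(ε |s - t|)`. Convexity then squeezes `L ∘ x` between its two subgradient
inequalities. With the chain rule in hand, `dE/dt = (x - b - W g) ⬝ᵥ Λ ẋ = -ẋ ⬝ᵥ Λ ẋ` because `W`
is symmetric.
-/

open Matrix Asymptotics Filter Topology

section LineDeriv

variable {𝕜 E F : Type*} [NontriviallyNormedField 𝕜] [NormedAddCommGroup E] [NormedSpace 𝕜 E]
  [NormedAddCommGroup F] [NormedSpace 𝕜 F] {f : E → F} {f' : F}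

theorem HasLineDerivAt.hasDerivAt_add_smul {p u : E} {s : 𝕜}
    (h : HasLineDerivAt 𝕜 f f' (p + s • u) u) : HasDerivAt (fun σ => f (p + σ • u)) f' s := by
  have h' := HasDerivAt.comp_sub_const s s (by rwa [sub_self])
  convert h' using 2 with σ
  rw [add_assoc, ← add_smul, add_sub_cancel]

theorem HasLineDerivAt.eventually_norm_sub_le {x v : E} (h : HasLineDerivAt 𝕜 f f' x v)
    {δ : ℝ} (hδ : 0 < δ) (t : 𝕜) :
    ∀ᶠ s in 𝓝 t, ‖f (x + (s - t) • v) - f x - (s - t) • f'‖ ≤ δ * ‖s - t‖ := by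
  have ht : Tendsto (fun s => s - t) (𝓝 t) (𝓝 0) := tendsto_sub_nhds_zero_iff.mpr tendsto_id
  exact ((hasLineDerivAt_iff_isLittleO_nhds_zero.mp h).comp_tendsto ht).def hδ

end LineDeriv

variable {ι : Type*} [Fintype ι]

section DotProduct

variable {𝕜 : Type*} [NontriviallyNormedField 𝕜]

theorem HasDerivAt.dotProduct {u v : 𝕜 → ι → 𝕜} {u' v' : ι → 𝕜} {t : 𝕜}
    (hu : HasDerivAt u u' t) (hv : HasDerivAt v v' t) :
    HasDerivAt (fun s => u s ⬝ᵥ v s) (u' ⬝ᵥ v t + u t ⬝ᵥ v') t := by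
  simpa [_root_.dotProduct, Finset.sum_add_distrib] using
    HasDerivAt.fun_sum fun i _ => (hasDerivAt_pi.mp hu i).mul (hasDerivAt_pi.mp hv i)

theorem HasDerivAt.mulVec {κ : Type*} [Fintype κ] (A : Matrix κ ι 𝕜) {p : 𝕜 → ι → 𝕜}
    {p' : ι → 𝕜} {t : 𝕜} (hp : HasDerivAt p p' t) :
    HasDerivAt (fun s => A *ᵥ p s) (A *ᵥ p') t :=
  hasDerivAt_pi.mpr fun i => by
    simpa [Matrix.mulVec] using (hasDerivAt_const t (A i)).dotProduct hp

end DotProduct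

theorem abs_dotProduct_le_of_norm_le {u v : ι → ℝ} {α β : ℝ} (hu : ‖u‖ ≤ α) (hv : ‖v‖ ≤ β) :
    |u ⬝ᵥ v| ≤ Fintype.card ι * α * β := by
  have hα : 0 ≤ α := (norm_nonneg u).trans hu
  calc |u ⬝ᵥ v| ≤ ∑ i, |u i * v i| := Finset.abs_sum_le_sum_abs _ _
    _ ≤ ∑ _i : ι, α * β := Finset.sum_le_sum fun i _ => by
        rw [abs_mul]
        exact mul_le_mul ((norm_le_pi_norm u i).trans hu) ((norm_le_pi_norm v i).trans hv)
          (abs_nonneg _) hα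
    _ = Fintype.card ι * α * β := by simp [mul_assoc]

theorem isBigO_dotProduct {α : Type*} {l : Filter α} (u v : α → ι → ℝ) :
    (fun s => u s ⬝ᵥ v s) =O[l] fun s => ‖u s‖ * ‖v s‖ :=
  isBigO_of_le' (c := Fintype.card ι) l fun s => by
    rw [Real.norm_eq_abs, Real.norm_eq_abs, abs_mul, abs_norm, abs_norm, ← mul_assoc]
    exact abs_dotProduct_le_of_norm_le le_rfl le_rfl

def IsMonotoneOperator (g : (ι → ℝ) → ι → ℝ) : Prop :=
  ∀ u v, 0 ≤ (g u - g v) ⬝ᵥ (u - v)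

section MonotoneOperator

variable {g : (ι → ℝ) → ι → ℝ}

theorem isMonotoneOperator_of_hasLineDerivAt {Λ : (ι → ℝ) → Matrix ι ι ℝ}
    (hΛ : ∀ x v, HasLineDerivAt ℝ g (Λ x *ᵥ v) x v) (hpsd : ∀ x v, 0 ≤ v ⬝ᵥ (Λ x *ᵥ v)) :
    IsMonotoneOperator g := by
  intro u v
  have hφ : ∀ σ : ℝ, HasDerivAt (fun σ => g (v + σ • (u - v)) ⬝ᵥ (u - v))
      ((Λ (v + σ • (u - v)) *ᵥ (u - v)) ⬝ᵥ (u - v)) σ := fun σ => by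
    simpa using (hΛ _ _).hasDerivAt_add_smul.dotProduct (hasDerivAt_const σ (u - v))
  have hφ_mono : Monotone fun σ => g (v + σ • (u - v)) ⬝ᵥ (u - v) :=
    monotone_of_deriv_nonneg (fun σ => (hφ σ).differentiableAt) fun σ => by
      rw [(hφ σ).deriv, dotProduct_comm]
      exact hpsd _ _
  have h01 := hφ_mono zero_le_one
  simp only [zero_smul, add_zero, one_smul, add_sub_cancel] at h01
  rw [sub_dotProduct]
  linarith

theorem IsMonotoneOperator.dotProduct_sub_le {L : (ι → ℝ) → ℝ} (hg : IsMonotoneOperator g)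
    (hL : ∀ x v, HasLineDerivAt ℝ L (g x ⬝ᵥ v) x v) (u v : ι → ℝ) :
    g v ⬝ᵥ (u - v) ≤ L u - L v := by
  have hψ : ∀ σ : ℝ,
      HasDerivAt (fun σ => L (v + σ • (u - v))) (g (v + σ • (u - v)) ⬝ᵥ (u - v)) σ :=
    fun σ => (hL _ _).hasDerivAt_add_smul
  have hψ_ge : ∀ σ ∈ interior (Set.Ici (0 : ℝ)),
      g v ⬝ᵥ (u - v) ≤ deriv (fun σ => L (v + σ • (u - v))) σ := by
    intro σ hσ
    rw [interior_Ici, Set.mem_Ioi] at hσ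
    have hmono := hg (v + σ • (u - v)) v
    rw [add_sub_cancel_left, dotProduct_smul, smul_eq_mul, sub_dotProduct] at hmono
    rw [(hψ σ).deriv]
    nlinarith
  simpa using (convex_Ici 0).mul_sub_le_image_sub_of_le_deriv
    (fun σ _ => (hψ σ).continuousAt.continuousWithinAt)
    (fun σ _ => (hψ σ).differentiableAt.differentiableWithinAt) hψ_ge
    0 Set.self_mem_Ici 1 (Set.mem_Ici.2 zero_le_one) zero_le_one

theorem IsMonotoneOperator.neg_mul_dotProduct_le (hg : IsMonotoneOperator g)
    (A : (ι → ℝ) →L[ℝ] ι → ℝ) {y z w q : ι → ℝ} {h ε δ : ℝ} (hq : ‖q‖ ≤ ε) (hδε : δ ≤ ε)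
    (hNδ : Fintype.card ι * δ ≤ ε / 2) (hr : ‖z - y - h • w‖ ≤ δ * |h|)
    (he : ‖g (y + h • (w - q)) - g y - h • A (w - q)‖ ≤ δ * |h|) :
    -(h * ((g z - g y - h • A w) ⬝ᵥ q)) ≤
      ε * |h| * (‖g z - g y - h • A w‖ / 2 + 2 * Fintype.card ι * (‖A‖ + 1) * ε * |h|) := by
  set a := g z - g y - h • A w
  set r := z - y - h • w
  set e := g (y + h • (w - q)) - g y - h • A (w - q)
  have hmono := hg z (y + h • (w - q))
  rw [show g z - g (y + h • (w - q)) = a + h • A q - e by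
      simp only [a, e, map_sub, smul_sub]; abel,
    show z - (y + h • (w - q)) = r + h • q by simp only [r, smul_sub]; abel] at hmono
  have hexpand : (a + h • A q - e) ⬝ᵥ (r + h • q) = a ⬝ᵥ r + h * (a ⬝ᵥ q) + h * (A q ⬝ᵥ r)
      + |h| ^ 2 * (A q ⬝ᵥ q) - e ⬝ᵥ r - h * (e ⬝ᵥ q) := by
    simp only [add_dotProduct, sub_dotProduct, dotProduct_add, smul_dotProduct, dotProduct_smul,
      smul_eq_mul, sq_abs]
    ring
  have hAq : ‖A q‖ ≤ ‖A‖ * ε := (A.le_opNorm q).trans (by gcongr)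
  have hr' : ‖r‖ ≤ ε * |h| := hr.trans (by gcongr)
  have he' : ‖e‖ ≤ ε * |h| := he.trans (by gcongr)
  have har : a ⬝ᵥ r ≤ Fintype.card ι * ‖a‖ * (δ * |h|) :=
    (le_abs_self _).trans (abs_dotProduct_le_of_norm_le le_rfl hr)
  have hAqr : h * (A q ⬝ᵥ r) ≤ |h| * (Fintype.card ι * (‖A‖ * ε) * (ε * |h|)) :=
    (le_abs_self _).trans_eq (abs_mul _ _) |>.trans <| by
      gcongr; exact abs_dotProduct_le_of_norm_le hAq hr'
  have hAqq : |h| ^ 2 * (A q ⬝ᵥ q) ≤ |h| ^ 2 * (Fintype.card ι * (‖A‖ * ε) * ε) := by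
    gcongr; exact (le_abs_self _).trans (abs_dotProduct_le_of_norm_le hAq hq)
  have her : -(e ⬝ᵥ r) ≤ Fintype.card ι * (ε * |h|) * (ε * |h|) :=
    (neg_le_abs _).trans (abs_dotProduct_le_of_norm_le he' hr')
  have heq : -(h * (e ⬝ᵥ q)) ≤ |h| * (Fintype.card ι * (ε * |h|) * ε) :=
    (neg_le_abs _).trans_eq (abs_mul _ _) |>.trans <| by
      gcongr; exact abs_dotProduct_le_of_norm_le he' hq
  have hNa := mul_le_mul_of_nonneg_right hNδ (mul_nonneg (norm_nonneg a) (abs_nonneg h))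
  linarith

theorem IsMonotoneOperator.norm_sub_sub_le [DecidableEq ι] (hg : IsMonotoneOperator g)
    (A : (ι → ℝ) →L[ℝ] ι → ℝ) {y z w : ι → ℝ} {h ε δ : ℝ} (hh : h ≠ 0) (hε : 0 < ε)
    (hδε : δ ≤ ε) (hNδ : Fintype.card ι * δ ≤ ε / 2) (hr : ‖z - y - h • w‖ ≤ δ * |h|)
    (he : ∀ i, ∀ σ ∈ ({1, -1} : Finset ℝ),
      ‖g (y + h • (w - σ • Pi.single i ε)) - g y - h • A (w - σ • Pi.single i ε)‖ ≤ δ * |h|) :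
    ‖g z - g y - h • A w‖ ≤ 4 * Fintype.card ι * (‖A‖ + 1) * ε * |h| := by
  set a := g z - g y - h • A w with ha
  set K : ℝ := 2 * Fintype.card ι * (‖A‖ + 1)
  have hh : 0 < |h| := abs_pos.2 hh
  have hcoord : ∀ i, |a i| ≤ ‖a‖ / 2 + K * ε * |h| := by
    intro i
    have hsingle : ‖(Pi.single i ε : ι → ℝ)‖ ≤ ε := by
      rw [Pi.norm_single, Real.norm_of_nonneg hε.le]
    have hpos := hg.neg_mul_dotProduct_le A hsingle hδε hNδ hr (by simpa using he i 1 (by simp))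
    have hneg := hg.neg_mul_dotProduct_le A (by rwa [norm_neg]) hδε hNδ hr
      (by simpa using he i (-1) (by simp))
    simp only [dotProduct_single, dotProduct_neg, ← ha] at hpos hneg
    have hprod : |h * (a i * ε)| ≤ ε * |h| * (‖a‖ / 2 + K * ε * |h|) :=
      abs_le.2 ⟨by linarith, by linarith⟩
    rw [abs_mul, abs_mul, abs_of_pos hε] at hprod
    exact le_of_mul_le_mul_left (by linarith) (by positivity : 0 < ε * |h|)
  have hnorm : ‖a‖ ≤ ‖a‖ / 2 + K * ε * |h| :=
    (pi_norm_le_iff_of_nonneg (by positivity)).2 hcoord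
  linarith

theorem IsMonotoneOperator.hasDerivAt_comp (hg : IsMonotoneOperator g)
    {A : (ι → ℝ) →L[ℝ] ι → ℝ} {x : ℝ → ι → ℝ} {x' : ι → ℝ} {t : ℝ}
    (hA : ∀ v, HasLineDerivAt ℝ g (A v) (x t) v) (hx : HasDerivAt x x' t) :
    HasDerivAt (fun s => g (x s)) (A x') t := by
  classical
  rw [hasDerivAt_iff_isLittleO, isLittleO_iff]
  intro c hc
  set N : ℝ := (Fintype.card ι : ℝ)
  set ε : ℝ := c / (4 * N * (‖A‖ + 1) + 1)
  set δ : ℝ := ε / (2 * N + 2)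
  have hε : 0 < ε := by positivity
  have hδ : 0 < δ := by positivity
  have hKε : 4 * N * (‖A‖ + 1) * ε ≤ c := by
    rw [← mul_div_assoc, div_le_iff₀ (by positivity)]
    nlinarith
  have hδε : δ ≤ ε := div_le_self hε.le (by linarith [show 0 ≤ N by positivity])
  have hNδ : N * δ ≤ ε / 2 := by
    rw [mul_div_assoc', div_le_div_iff₀ (by positivity) two_pos]
    nlinarith [show 0 ≤ N by positivity]
  have hr := (hasDerivAt_iff_isLittleO.mp hx).def hδ
  have he : ∀ᶠ s in 𝓝 t, ∀ i, ∀ σ ∈ ({1, -1} : Finset ℝ),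
      ‖g (x t + (s - t) • (x' - σ • Pi.single i ε)) - g (x t)
        - (s - t) • A (x' - σ • Pi.single i ε)‖ ≤ δ * ‖s - t‖ :=
    eventually_all.2 fun i => (Finset.eventually_all _).2 fun σ _ =>
      (hA _).eventually_norm_sub_le hδ t
  filter_upwards [hr, he] with s hr he
  simp only [Real.norm_eq_abs] at hr he ⊢
  rcases eq_or_ne s t with rfl | hst
  · simp
  exact (hg.norm_sub_sub_le A (sub_ne_zero.2 hst) hε hδε hNδ hr he).trans (by gcongr)

end MonotoneOperator

theorem hasDerivAt_comp_of_subgradient {L : (ι → ℝ) → ℝ} {g : (ι → ℝ) → ι → ℝ}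
    (hsub : ∀ u v, g v ⬝ᵥ (u - v) ≤ L u - L v) {x : ℝ → ι → ℝ} {x' : ι → ℝ} {t : ℝ}
    (hx : HasDerivAt x x' t) (hgx : ContinuousAt (fun s => g (x s)) t) :
    HasDerivAt (fun s => L (x s)) (g (x t) ⬝ᵥ x') t := by
  rw [hasDerivAt_iff_isLittleO]
  have hgap : (fun s => (g (x s) - g (x t)) ⬝ᵥ (x s - x t)) =o[𝓝 t] fun s => s - t := by
    have hg0 : (fun s => g (x s) - g (x t)) =o[𝓝 t] fun _ => (1 : ℝ) :=
      (isLittleO_one_iff ℝ).2 (by simpa using hgx.tendsto.sub_const (g (x t)))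
    refine (isBigO_dotProduct _ _).trans_isLittleO ?_
    simpa using hg0.norm_left.mul_isBigO hx.isBigO_sub.norm_left
  have hrem : (fun s => g (x t) ⬝ᵥ (x s - x t - (s - t) • x')) =o[𝓝 t] fun s => s - t :=
    (isBigO_dotProduct _ _).trans_isLittleO
      ((hasDerivAt_iff_isLittleO.mp hx).norm_left.const_mul_left _)
  have hsandwich : (fun s => L (x s) - L (x t) - g (x t) ⬝ᵥ (x s - x t)) =O[𝓝 t]
      fun s => (g (x s) - g (x t)) ⬝ᵥ (x s - x t) := by
    refine isBigO_of_le _ fun s => ?_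
    have hlow := hsub (x s) (x t)
    have hup := hsub (x t) (x s)
    rw [← neg_sub (x s), dotProduct_neg] at hup
    rw [sub_dotProduct, Real.norm_eq_abs, Real.norm_eq_abs, abs_of_nonneg (by linarith),
      abs_of_nonneg (by linarith)]
    linarith
  refine ((hsandwich.trans_isLittleO hgap).add hrem).congr_left fun s => ?_
  simp only [dotProduct_sub, dotProduct_smul, smul_eq_mul]
  ring

theorem hopfield_energy_lyapunov_general {n : ℕ}
    (L : (Fin n → ℝ) → ℝ) (g : (Fin n → ℝ) → Fin n → ℝ)
    (Λ : (Fin n → ℝ) → Matrix (Fin n) (Fin n) ℝ)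
    (W : Matrix (Fin n) (Fin n) ℝ) (b : Fin n → ℝ)
    (hW : Wᵀ = W)
    -- g is the gradient of L
    (hg : ∀ x v, HasDerivAt (fun t : ℝ => L (x + t • v)) (g x ⬝ᵥ v) 0)
    -- Λ is the Hessian of L (Jacobian of g)
    (hΛ : ∀ x v, HasDerivAt (fun t : ℝ => g (x + t • v)) (Λ x *ᵥ v) 0)
    -- the Hessian is positive semidefinite everywhere
    (hpsd : ∀ x v, 0 ≤ v ⬝ᵥ (Λ x *ᵥ v))
    (x x' : ℝ → Fin n → ℝ)
    (hx : ∀ t, HasDerivAt x (x' t) t)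
    (hdyn : ∀ t, x' t = W *ᵥ g (x t) - x t + b) :
    ∀ t, HasDerivAt
        (fun s => (x s - b) ⬝ᵥ g (x s) - L (x s) - (1 / 2) * (g (x s) ⬝ᵥ (W *ᵥ g (x s))))
        (-(x' t ⬝ᵥ (Λ (x t) *ᵥ x' t))) t ∧
      -(x' t ⬝ᵥ (Λ (x t) *ᵥ x' t)) ≤ 0 := by
  intro t
  have hmono : IsMonotoneOperator g := isMonotoneOperator_of_hasLineDerivAt hΛ hpsd
  have hgx : HasDerivAt (fun s => g (x s)) (Λ (x t) *ᵥ x' t) t :=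
    hmono.hasDerivAt_comp (A := (Matrix.toLin' (Λ (x t))).toContinuousLinearMap) (hΛ (x t))
      (hx t)
  have hLx : HasDerivAt (fun s => L (x s)) (g (x t) ⬝ᵥ x' t) t :=
    hasDerivAt_comp_of_subgradient (hmono.dotProduct_sub_le hg) (hx t) hgx.continuousAt
  refine ⟨((((hx t).sub_const b).dotProduct hgx).sub hLx |>.sub
    ((hgx.dotProduct (hgx.mulVec W)).const_mul (1 / 2))).congr_deriv ?_, neg_nonpos.2 (hpsd _ _)⟩
  have hxb : x t - b = W *ᵥ g (x t) - x' t := by rw [hdyn t]; abel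
  have hWsymm : g (x t) ⬝ᵥ (W *ᵥ (Λ (x t) *ᵥ x' t)) = W *ᵥ g (x t) ⬝ᵥ (Λ (x t) *ᵥ x' t) := by
    rw [dotProduct_mulVec, ← mulVec_transpose, hW]
  rw [hxb, hWsymm, sub_dotProduct, dotProduct_comm (x' t), dotProduct_comm (Λ (x t) *ᵥ x' t)]
  ring

/-- For the Hopfield dynamics `ẋ = W g(x) - x + b` with `g = ∇L`, symmetric `W` and
positive semidefinite Hessian `Λ = ∇²L`, the energy
`E_H(x) = (x - b)ᵀ g(x) - L(x) - ½ g(x)ᵀ W g(x)` satisfies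
`dE_H/dt = -ẋᵀ Λ(x) ẋ ≤ 0` along trajectories. -/
theorem hopfield_energy_lyapunov {n : ℕ}
    (L : (Fin n → ℝ) → ℝ) (g : (Fin n → ℝ) → Fin n → ℝ)
    (Λ : (Fin n → ℝ) → Matrix (Fin n) (Fin n) ℝ)
    (W : Matrix (Fin n) (Fin n) ℝ) (b : Fin n → ℝ)
    (hW : Wᵀ = W)
    -- g is the gradient of L
    (hg : ∀ x v, HasDerivAt (fun t : ℝ => L (x + t • v)) (g x ⬝ᵥ v) 0)
    -- Λ is the Hessian of L (Jacobian of g)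
    (hΛ : ∀ x v, HasDerivAt (fun t : ℝ => g (x + t • v)) (Λ x *ᵥ v) 0)
    (hΛsymm : ∀ x, (Λ x)ᵀ = Λ x)
    -- the Hessian is positive semidefinite everywhere
    (hpsd : ∀ x v, 0 ≤ v ⬝ᵥ (Λ x *ᵥ v))
    (x x' : ℝ → Fin n → ℝ)
    (hx : ∀ t, HasDerivAt x (x' t) t)
    (hdyn : ∀ t, x' t = W *ᵥ g (x t) - x t + b) :
    ∀ t, HasDerivAt
        (fun s => (x s - b) ⬝ᵥ g (x s) - L (x s) - (1 / 2) * (g (x s) ⬝ᵥ (W *ᵥ g (x s))))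
        (-(x' t ⬝ᵥ (Λ (x t) *ᵥ x' t))) t ∧
      -(x' t ⬝ᵥ (Λ (x t) *ᵥ x' t)) ≤ 0 :=
  hopfield_energy_lyapunov_general L g Λ W b hW hg hΛ hpsd x x' hx hdyn
end

section
/- Under the change of variables νᵢ(t) = exp(-Ωt) μᵢ(t) with a common skew-symmetric Ω, the generalized Kuramoto system μ̇ᵢ = Ωμᵢ - (I - μᵢμᵢᵀ) ∂E_K/∂μᵢ, where E_K depends only on scalar products, transforms into the constrained gradient flow ν̇ᵢ = -(I - νᵢνᵢᵀ) ∂E_K/∂νᵢ. -/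
open scoped Matrix

open NormedSpace

/-!
By the product rule `ν̇ᵢ = exp(-tΩ)(μ̇ᵢ - Ωμᵢ) = -exp(-tΩ)(I - μᵢμᵢᵀ) ∂E/∂μᵢ`: the drift cancels.
Since `Ω` is skew, `R = exp(-tΩ)` is orthogonal. Rotation invariance of `E` makes its gradient
equivariant, `∂E/∂νᵢ = R ∂E/∂μᵢ`, and `R(I - μμᵀ) = (I - (Rμ)(Rμ)ᵀ)R`, which gives the claim.
-/

namespace Matrix

variable {m n ι : Type*}

theorem exp_transpose_mul_exp_of_transpose_eq_neg [Fintype m] [DecidableEq m] {𝕂 : Type*}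
    [RCLike 𝕂] {A : Matrix m m 𝕂} (hA : Aᵀ = -A) : (exp A)ᵀ * exp A = 1 := by
  rw [← exp_transpose, hA, ← exp_add_of_commute _ _ (Commute.refl A).neg_left, neg_add_cancel,
    exp_zero]

theorem hasDerivAt_exp_smul_const_apply [Fintype m] [DecidableEq m] {𝕂 : Type*} [RCLike 𝕂]
    (A : Matrix m m 𝕂) (t : 𝕂) (i j : m) :
    HasDerivAt (fun s : 𝕂 => exp (s • A) i j) ((exp (t • A) * A) i j) t := by
  let _ : NormedRing (Matrix m m 𝕂) := Matrix.linftyOpNormedRing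
  let _ : NormedAlgebra 𝕂 (Matrix m m 𝕂) := Matrix.linftyOpNormedAlgebra
  exact (LinearMap.toContinuousLinearMap (entryLinearMap 𝕂 𝕂 i j)).hasFDerivAt.comp_hasDerivAt t
    (@hasDerivAt_exp_smul_const _ _ _ _ _ (FiniteDimensional.complete 𝕂 _) A t)

theorem _root_.HasDerivAt.matrix_mulVec [Fintype n] {𝕜 : Type*} [NontriviallyNormedField 𝕜]
    {M : 𝕜 → Matrix m n 𝕜} {M' : Matrix m n 𝕜} {v : 𝕜 → n → 𝕜} {v' : n → 𝕜} {t : 𝕜}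
    (hM : ∀ i j, HasDerivAt (fun s => M s i j) (M' i j) t) (hv : HasDerivAt v v' t) :
    HasDerivAt (fun s => M s *ᵥ v s) (M' *ᵥ v t + M t *ᵥ v') t := by
  refine hasDerivAt_pi.mpr fun i => ?_
  simp only [Pi.add_apply, mulVec, dotProduct, ← Finset.sum_add_distrib]
  exact HasDerivAt.fun_sum fun j _ => (hM i j).mul (hasDerivAt_pi.mp hv j)

theorem hasDerivAt_exp_neg_smul_mulVec [Fintype m] [DecidableEq m] {𝕂 : Type*} [RCLike 𝕂]
    (A : Matrix m m 𝕂) {v : 𝕂 → m → 𝕂} {v' : m → 𝕂} {t : 𝕂} (hv : HasDerivAt v v' t) :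
    HasDerivAt (fun s => exp ((-s) • A) *ᵥ v s) (exp ((-t) • A) *ᵥ (v' - A *ᵥ v t)) t := by
  have hexp (i j : m) :
      HasDerivAt (fun s => exp ((-s) • A) i j) ((exp ((-t) • A) * -A) i j) t := by
    simpa only [neg_smul, smul_neg] using hasDerivAt_exp_smul_const_apply (-A) t i j
  convert HasDerivAt.matrix_mulVec hexp hv using 1
  rw [mulVec_sub, mulVec_mulVec, mul_neg, neg_mulVec]
  abel

theorem eq_of_forall_sum_dotProduct_eq [Fintype ι] [DecidableEq ι] [Fintype n] [DecidableEq n]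
    {α : Type*} [CommSemiring α] {a b : ι → n → α}
    (h : ∀ ν : ι → n → α, ∑ j, a j ⬝ᵥ ν j = ∑ j, b j ⬝ᵥ ν j) : a = b := by
  ext i k
  simpa [Pi.single_apply, apply_ite, dotProduct_single] using h (Pi.single i (Pi.single k 1))

theorem grad_mulVec_of_invariant [Fintype ι] [DecidableEq ι] [Fintype n] [DecidableEq n]
    {𝕜 : Type*} [NontriviallyNormedField 𝕜] {E : (ι → n → 𝕜) → 𝕜}
    {gradE : (ι → n → 𝕜) → ι → n → 𝕜}
    (hgrad : ∀ μ ν : ι → n → 𝕜,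
      HasDerivAt (fun t : 𝕜 => E fun i => μ i + t • ν i) (∑ i, gradE μ i ⬝ᵥ ν i) 0)
    {R : Matrix n n 𝕜} (hR : Rᵀ * R = 1) (hE : ∀ μ, E (fun i => R *ᵥ μ i) = E μ)
    (μ : ι → n → 𝕜) (i : ι) :
    gradE (fun j => R *ᵥ μ j) i = R *ᵥ gradE μ i := by
  have hdir (ν : ι → n → 𝕜) :
      ∑ j, (Rᵀ *ᵥ gradE (fun j => R *ᵥ μ j) j) ⬝ᵥ ν j = ∑ j, gradE μ j ⬝ᵥ ν j := by
    have hline : (fun t : 𝕜 => E fun j => R *ᵥ μ j + t • R *ᵥ ν j) =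
        fun t => E fun j => μ j + t • ν j := by
      funext t
      rw [← hE fun j => μ j + t • ν j]
      simp only [mulVec_add, mulVec_smul]
    have hrot := hgrad (fun j => R *ᵥ μ j) (fun j => R *ᵥ ν j)
    rw [hline] at hrot
    simpa only [mulVec_transpose, ← dotProduct_mulVec] using hrot.unique (hgrad μ ν)
  rw [← eq_of_forall_sum_dotProduct_eq hdir, mulVec_mulVec, mul_eq_one_comm.mp hR, one_mulVec]

theorem dotProduct_mulVec_mulVec_of_transpose_mul_self [Fintype n] [DecidableEq n] {α : Type*}
    [CommSemiring α] {R : Matrix n n α} (hR : Rᵀ * R = 1) (a b : n → α) :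
    (R *ᵥ a) ⬝ᵥ (R *ᵥ b) = a ⬝ᵥ b := by
  rw [dotProduct_mulVec, ← mulVec_transpose, mulVec_mulVec, hR, one_mulVec]

theorem one_sub_vecMulVec_mulVec_of_transpose_mul_self [Fintype n] [DecidableEq n] {α : Type*}
    [CommRing α] {R : Matrix n n α} (hR : Rᵀ * R = 1) (a g : n → α) :
    (1 - vecMulVec (R *ᵥ a) (R *ᵥ a)) *ᵥ (R *ᵥ g) = R *ᵥ ((1 - vecMulVec a a) *ᵥ g) := by
  simp only [sub_mulVec, one_mulVec, vecMulVec_mulVec, op_smul_eq_smul, mulVec_sub, mulVec_smul,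
    dotProduct_mulVec_mulVec_of_transpose_mul_self hR]

end Matrix

open Matrix

/-- Under the change of variables `νᵢ(t) = exp(-tΩ) μᵢ(t)` with a common
skew-symmetric `Ω`, the generalized Kuramoto system
`μ̇ᵢ = Ωμᵢ - (I - μᵢμᵢᵀ) ∂E_K/∂μᵢ`, where `E_K` is invariant under simultaneous
rotation of all its arguments (it depends only on scalar products), transforms into the
constrained gradient flow `ν̇ᵢ = -(I - νᵢνᵢᵀ) ∂E_K/∂νᵢ`. -/
theorem kuramoto_rotating_frame {N D : ℕ}
    (E : (Fin N → Fin (D + 1) → ℝ) → ℝ)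
    (gradE : (Fin N → Fin (D + 1) → ℝ) → Fin N → Fin (D + 1) → ℝ)
    (hgrad : ∀ μ ν : Fin N → Fin (D + 1) → ℝ,
      HasDerivAt (fun t : ℝ => E fun i => μ i + t • ν i) (∑ i, gradE μ i ⬝ᵥ ν i) 0)
    -- invariance under simultaneous rotations
    (hinv : ∀ R : Matrix (Fin (D + 1)) (Fin (D + 1)) ℝ, Rᵀ * R = 1 →
      ∀ μ : Fin N → Fin (D + 1) → ℝ, E (fun i => R *ᵥ μ i) = E μ)
    (Ω : Matrix (Fin (D + 1)) (Fin (D + 1)) ℝ) (hΩ : Ωᵀ = -Ω)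
    (μ : Fin N → ℝ → Fin (D + 1) → ℝ)
    (hdyn : ∀ i t, HasDerivAt (μ i)
      (Ω *ᵥ μ i t -
        ((1 : Matrix (Fin (D + 1)) (Fin (D + 1)) ℝ) - Matrix.vecMulVec (μ i t) (μ i t)) *ᵥ
          gradE (fun j => μ j t) i) t) :
    ∀ i t, HasDerivAt (fun s => NormedSpace.exp ((-s) • Ω) *ᵥ μ i s)
      (-(((1 : Matrix (Fin (D + 1)) (Fin (D + 1)) ℝ) -
            Matrix.vecMulVec (NormedSpace.exp ((-t) • Ω) *ᵥ μ i t)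
              (NormedSpace.exp ((-t) • Ω) *ᵥ μ i t)) *ᵥ
          gradE (fun j => NormedSpace.exp ((-t) • Ω) *ᵥ μ j t) i)) t := by
  intro i t
  have hR : (exp ((-t) • Ω))ᵀ * exp ((-t) • Ω) = 1 :=
    exp_transpose_mul_exp_of_transpose_eq_neg (by rw [transpose_smul, hΩ, smul_neg])
  have hν := hasDerivAt_exp_neg_smul_mulVec Ω (hdyn i t)
  rwa [grad_mulVec_of_invariant hgrad hR (hinv _ hR),
    one_sub_vecMulVec_mulVec_of_transpose_mul_self hR, ← mulVec_neg,
    ← sub_sub_cancel_left (Ω *ᵥ μ i t)]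
end
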